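/- Let n ≥ 2 and let (T, J) be an ℕ^n-pair such that L₀ ⊆ J, where L₀ = {x ∈ ℕ^n : some coordinate of x is 0}. Let a ∈ (ℕ\{0})^n be the germ of T, i.e., the minimum of T\{0} under the coordinatewise strict order. Then there exists an ℕ-pair (A, B) (A ⊕ B = ℕ, A, B ⊆ ℕ) such that T = {k·a : k ∈ A} and J = {k·a : k ∈ B} ⊕ L_a, where L_a = ℕ^n \ (ℕ^n + a). -/

import Mathlib

open Pointwise

/-- Unique decompositions: every sum `a + b` with `a ∈ A`, `b ∈ B` determines `a` and `b`. -/
def UniqueSumsOn {α : Type*} [Add α] (A B : Set α) : Prop :=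
  ∀ a ∈ A, ∀ b ∈ B, ∀ a' ∈ A, ∀ b' ∈ B, a + b = a' + b' → a = a' ∧ b = b'

/-- `C = A ⊕ B`: `C` is the direct sum of `A` and `B`. -/
def IsDirectSum {α : Type*} [Add α] (A B C : Set α) : Prop :=
  C = A + B ∧ UniqueSumsOn A B


/-- `L_a = ℕ^n \ (ℕ^n + a)`. -/
def La {n : ℕ} (a : Fin n → ℕ) : Set (Fin n → ℕ) :=
  Set.univ \ {x | ∃ y : Fin n → ℕ, x = y + a}

/-!
Every `x ∈ ℕ^n` is uniquely `k • a + s` with `s ∈ L_a`, and minimality of the germ puts `L_a`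
inside `J`. By well-founded induction on `x` one shows that `x ∈ T` forces `s = 0` and that
`x ∈ J ↔ k • a ∈ J`: decomposing `x` and `k • a` as sums from `T` and `J` and applying the claim
to the smaller summands, uniqueness of decompositions settles every case but one, namely
`x = k • a + s ∈ T` with `k • a ∈ J`, `k ≠ 0`, `s ≠ 0`. There
`x + (a - s) = a + (k • a + (s - a))` writes one point in two ways as a sum from `T` and `J`,
forcing `x = a`, which is absurd.
-/

namespace IsDirectSum

variable {M : Type*} [AddCommMonoid M] {T J : Set M}

theorem exists_add (h : IsDirectSum T J Set.univ) (x : M) : ∃ t ∈ T, ∃ j ∈ J, t + j = x := by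
  have hx : x ∈ T + J := h.1 ▸ Set.mem_univ x
  simpa [Set.mem_add] using hx

variable [Subsingleton (AddUnits M)]

theorem zero_mem_left (h : IsDirectSum T J Set.univ) : 0 ∈ T := by
  obtain ⟨t, ht, j, -, htj⟩ := h.exists_add 0
  exact (add_eq_zero.1 htj).1 ▸ ht

theorem zero_mem_right (h : IsDirectSum T J Set.univ) : 0 ∈ J := by
  obtain ⟨t, -, j, hj, htj⟩ := h.exists_add 0
  exact (add_eq_zero.1 htj).2 ▸ hj

theorem add_mem_left_iff (h : IsDirectSum T J Set.univ) {t j : M} (ht : t ∈ T) (hj : j ∈ J) :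
    t + j ∈ T ↔ j = 0 := by
  refine ⟨fun htj => ?_, fun hj0 => by rwa [hj0, add_zero]⟩
  exact (h.2 t ht j hj (t + j) htj 0 h.zero_mem_right (add_zero _).symm).2

theorem add_mem_right_iff (h : IsDirectSum T J Set.univ) {t j : M} (ht : t ∈ T) (hj : j ∈ J) :
    t + j ∈ J ↔ t = 0 := by
  refine ⟨fun htj => ?_, fun ht0 => by rwa [ht0, zero_add]⟩
  exact (h.2 t ht j hj 0 h.zero_mem_left (t + j) htj (zero_add _).symm).1

theorem eq_zero_of_mem_left_of_mem_right (h : IsDirectSum T J Set.univ) {x : M} (hT : x ∈ T)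
    (hJ : x ∈ J) : x = 0 :=
  (h.add_mem_right_iff hT h.zero_mem_right).1 (by rwa [add_zero])

end IsDirectSum

section La

variable {n : ℕ} {a : Fin n → ℕ}

theorem mem_La_iff {x : Fin n → ℕ} : x ∈ La a ↔ ¬ a ≤ x := by
  simp [La, le_iff_exists_add']

theorem zero_mem_La (ha : a ≠ 0) : 0 ∈ La a :=
  mem_La_iff.2 fun h => ha (le_zero_iff.1 h)

theorem exists_nsmul_add_mem_La (ha : a ≠ 0) (x : Fin n → ℕ) :
    ∃ k : ℕ, ∃ s ∈ La a, x = k • a + s := by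
  induction x using WellFoundedLT.induction with
  | _ x ih =>
  by_cases hax : a ≤ x
  · obtain ⟨y, rfl⟩ := le_iff_exists_add'.1 hax
    obtain ⟨k, s, hs, rfl⟩ := ih y (lt_add_of_pos_right y (pos_iff_ne_zero.2 ha))
    exact ⟨k + 1, s, hs, by rw [succ_nsmul, add_right_comm]⟩
  · exact ⟨0, x, mem_La_iff.2 hax, by rw [zero_smul, zero_add]⟩

theorem eq_of_nsmul_add_eq {k k' : ℕ} {s s' : Fin n → ℕ} (hs : s ∈ La a) (hs' : s' ∈ La a)
    (h : k • a + s = k' • a + s') : k = k' ∧ s = s' := by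
  wlog hkk' : k ≤ k' generalizing k k' s s'
  · obtain ⟨hk, hs⟩ := this hs' hs h.symm (by omega)
    exact ⟨hk.symm, hs.symm⟩
  obtain ⟨d, rfl⟩ := Nat.exists_eq_add_of_le hkk'
  rw [add_nsmul, add_assoc, add_right_inj] at h
  obtain _ | d := d
  · simpa using h
  · refine absurd ?_ (mem_La_iff.1 hs)
    rw [h, succ_nsmul, add_right_comm]
    exact le_add_self

theorem nsmul_left_inj (ha : a ≠ 0) {k k' : ℕ} : k • a = k' • a ↔ k = k' := by
  refine ⟨fun h => ?_, fun h => h ▸ rfl⟩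
  simpa using (eq_of_nsmul_add_eq (zero_mem_La ha) (zero_mem_La ha) (by simpa using h)).1

end La

section Germ

variable {n : ℕ} {T J : Set (Fin n → ℕ)} {a : Fin n → ℕ}

/-- The pointwise form of `T = A • a` and `J = B • a ⊕ L_a`. -/
def MemDeterminedByMultiple (T J : Set (Fin n → ℕ)) (a x : Fin n → ℕ) : Prop :=
  ∀ (k : ℕ), ∀ s ∈ La a, x = k • a + s → (x ∈ T → s = 0) ∧ (x ∈ J ↔ k • a ∈ J)

theorem La_subset_right (h : IsDirectSum T J Set.univ) (hmin : ∀ t ∈ T, t ≠ 0 → a ≤ t) :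
    La a ⊆ J := by
  intro s hs
  obtain ⟨t, ht, j, hj, rfl⟩ := h.exists_add s
  obtain rfl : t = 0 := by
    by_contra ht0
    exact mem_La_iff.1 hs ((hmin t ht ht0).trans le_self_add)
  rwa [zero_add]

theorem exists_nsmul_mem_left_nsmul_mem_right (h : IsDirectSum T J Set.univ) (ha : a ≠ 0)
    {k : ℕ} (ih : ∀ y < k • a, MemDeterminedByMultiple T J a y) :
    ∃ m m' : ℕ, m + m' = k ∧ m • a ∈ T ∧ m' • a ∈ J := by
  obtain ⟨t, ht, j, hj, htj⟩ := h.exists_add (k • a)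
  by_cases hj0 : j = 0
  · rw [hj0, add_zero] at htj
    exact ⟨k, 0, add_zero k, htj ▸ ht, by simpa using h.zero_mem_right⟩
  obtain ⟨m, st, hst, rfl⟩ := exists_nsmul_add_mem_La ha t
  have ht_lt : m • a + st < k • a := htj ▸ lt_add_of_pos_right _ (pos_iff_ne_zero.2 hj0)
  obtain rfl : st = 0 := (ih _ ht_lt m st hst rfl).1 ht
  obtain ⟨m', sj, hsj, rfl⟩ := exists_nsmul_add_mem_La ha j
  have hka : (m + m') • a + sj = k • a + 0 := by rw [add_nsmul, ← htj]; abel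
  obtain ⟨rfl, rfl⟩ := eq_of_nsmul_add_eq hsj (zero_mem_La ha) hka
  exact ⟨m, m', rfl, by simpa using ht, by simpa using hj⟩

theorem memDeterminedByMultiple_add (h : IsDirectSum T J Set.univ) (ha : a ≠ 0)
    {t j : Fin n → ℕ} (ht : t ∈ T) (hj : j ∈ J) (ht0 : t ≠ 0) (hj0 : j ≠ 0)
    (hPt : MemDeterminedByMultiple T J a t) (hPj : MemDeterminedByMultiple T J a j) :
    MemDeterminedByMultiple T J a (t + j) := by
  intro k s hs hx
  obtain ⟨m, st, hst, rfl⟩ := exists_nsmul_add_mem_La ha t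
  obtain rfl : st = 0 := (hPt m st hst rfl).1 ht
  obtain ⟨m', sj, hsj, rfl⟩ := exists_nsmul_add_mem_La ha j
  have hm'J : m' • a ∈ J := (hPj m' sj hsj rfl).2.1 hj
  have hx' : k • a + s = (m + m') • a + sj := by rw [← hx, add_nsmul]; abel
  obtain ⟨rfl, rfl⟩ := eq_of_nsmul_add_eq hs hsj hx'
  rw [add_zero] at ht ht0
  refine ⟨fun hT => absurd ((h.add_mem_left_iff ht hj).1 (by simpa using hT)) hj0, ?_⟩
  rw [add_nsmul, iff_false_intro (mt (h.add_mem_right_iff ht hm'J).1 ht0), iff_false]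
  exact mt (h.add_mem_right_iff ht hj).1 (by simpa using ht0)

theorem nsmul_mem_right_of_mem_right (h : IsDirectSum T J Set.univ) (ha : a ≠ 0)
    {k : ℕ} {s : Fin n → ℕ} (hs : s ∈ La a)
    (ih : ∀ y < k • a + s, MemDeterminedByMultiple T J a y) (hxJ : k • a + s ∈ J) :
    k • a ∈ J := by
  by_cases hs0 : s = 0
  · simpa [hs0] using hxJ
  have hlt : k • a < k • a + s := lt_add_of_pos_right _ (pos_iff_ne_zero.2 hs0)
  obtain ⟨m, m', rfl, hmT, hm'J⟩ :=
    exists_nsmul_mem_left_nsmul_mem_right h ha fun y hy => ih y (hy.trans hlt)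
  obtain rfl | hm := eq_or_ne m 0
  · simpa using hm'J
  have hma : m • a ≠ 0 := smul_ne_zero hm ha
  rw [add_nsmul, add_assoc] at hxJ ih
  have hyJ : m' • a + s ∈ J :=
    (ih _ (lt_add_of_pos_left _ (pos_iff_ne_zero.2 hma)) m' s hs rfl).2.2 hm'J
  exact absurd ((h.add_mem_right_iff hmT hyJ).1 hxJ) hma

theorem nsmul_add_notMem_left (h : IsDirectSum T J Set.univ) (hmin : ∀ t ∈ T, t ≠ 0 → a ≤ t)
    (haT : a ∈ T) (ha : ∀ i, 0 < a i) {k : ℕ} {s : Fin n → ℕ} (hk : k ≠ 0) (hkJ : k • a ∈ J)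
    (hs : s ∈ La a) (hs0 : s ≠ 0) (ih : ∀ y < k • a + s, MemDeterminedByMultiple T J a y) :
    k • a + s ∉ T := by
  intro hxT
  obtain ⟨p, hp⟩ : ∃ p, s p ≠ 0 := Function.ne_iff.1 hs0
  have hsa : s - a ∈ La a := mem_La_iff.2 fun has => mem_La_iff.1 hs (has.trans tsub_le_self)
  have hr : a - s ∈ La a := mem_La_iff.2 fun has => by
    have := has p; have := ha p; simp only [Pi.sub_apply] at *; omega
  have hlt : k • a + (s - a) < k • a + s := by
    refine add_lt_add_right (Pi.lt_def.2 ⟨tsub_le_self, p, ?_⟩) _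
    have := ha p; simp only [Pi.sub_apply]; omega
  have hyJ : k • a + (s - a) ∈ J := (ih _ hlt k _ hsa rfl).2.2 hkJ
  have heq : (k • a + s) + (a - s) = a + (k • a + (s - a)) := by
    funext i; simp only [Pi.add_apply, Pi.sub_apply, Pi.smul_apply, smul_eq_mul]; omega
  have hxa := (h.2 _ hxT _ (La_subset_right h hmin hr) a haT _ hyJ heq).1
  obtain ⟨k, rfl⟩ := Nat.exists_eq_succ_of_ne_zero hk
  rw [succ_nsmul', add_assoc, add_eq_left] at hxa
  exact hs0 (add_eq_zero.1 hxa).2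

theorem eq_zero_of_nsmul_add_mem_left (h : IsDirectSum T J Set.univ)
    (hmin : ∀ t ∈ T, t ≠ 0 → a ≤ t) (haT : a ∈ T) (ha : ∀ i, 0 < a i) (ha0 : a ≠ 0)
    {k : ℕ} {s : Fin n → ℕ} (hs : s ∈ La a)
    (ih : ∀ y < k • a + s, MemDeterminedByMultiple T J a y) (hxT : k • a + s ∈ T) : s = 0 := by
  by_contra hs0
  have hlt : k • a < k • a + s := lt_add_of_pos_right _ (pos_iff_ne_zero.2 hs0)
  obtain ⟨m, m', rfl, hmT, hm'J⟩ :=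
    exists_nsmul_mem_left_nsmul_mem_right h ha0 fun y hy => ih y (hy.trans hlt)
  obtain rfl | hm := eq_or_ne m 0
  · rw [zero_add] at hxT ih
    obtain rfl | hm' := eq_or_ne m' 0
    · rw [zero_smul, zero_add] at hxT
      exact mem_La_iff.1 hs (hmin s hxT hs0)
    exact nsmul_add_notMem_left h hmin haT ha hm' hm'J hs hs0 ih hxT
  have hma : m • a ≠ 0 := smul_ne_zero hm ha0
  rw [add_nsmul, add_assoc] at hxT ih
  have hyJ : m' • a + s ∈ J :=
    (ih _ (lt_add_of_pos_left _ (pos_iff_ne_zero.2 hma)) m' s hs rfl).2.2 hm'J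
  exact hs0 (add_eq_zero.1 ((h.add_mem_left_iff hmT hyJ).1 hxT)).2

theorem memDeterminedByMultiple (h : IsDirectSum T J Set.univ)
    (hmin : ∀ t ∈ T, t ≠ 0 → a ≤ t) (haT : a ∈ T) (ha : ∀ i, 0 < a i) (ha0 : a ≠ 0)
    (x : Fin n → ℕ) : MemDeterminedByMultiple T J a x := by
  induction x using WellFoundedLT.induction with
  | _ x ih =>
  obtain ⟨t, ht, j, hj, rfl⟩ := h.exists_add x
  by_cases ht0 : t = 0
  · subst ht0
    rw [zero_add] at ih ⊢
    rintro k s hs rfl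
    refine ⟨fun hjT => ?_, fun _ => nsmul_mem_right_of_mem_right h ha0 hs ih hj, fun _ => hj⟩
    exact (add_eq_zero.1 (h.eq_zero_of_mem_left_of_mem_right hjT hj)).2
  by_cases hj0 : j = 0
  · subst hj0
    rw [add_zero] at ih ⊢
    rintro k s hs rfl
    obtain rfl := eq_zero_of_nsmul_add_mem_left h hmin haT ha ha0 hs ih ht
    exact ⟨fun _ => rfl, by rw [add_zero]⟩
  exact memDeterminedByMultiple_add h ha0 ht hj ht0 hj0
    (ih t (lt_add_of_pos_right t (pos_iff_ne_zero.2 hj0)))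
    (ih j (lt_add_of_pos_left j (pos_iff_ne_zero.2 ht0)))

theorem isDirectSum_nsmul_mem (h : IsDirectSum T J Set.univ) (ha : a ≠ 0)
    (hP : ∀ x, MemDeterminedByMultiple T J a x) :
    IsDirectSum {k : ℕ | k • a ∈ T} {k | k • a ∈ J} Set.univ := by
  refine ⟨?_, fun k₁ h₁ k₂ h₂ k₁' h₁' k₂' h₂' heq => ?_⟩
  · ext k
    obtain ⟨m, m', rfl, hm, hm'⟩ :=
      exists_nsmul_mem_left_nsmul_mem_right h ha (k := k) fun y _ => hP y
    simpa using Set.add_mem_add (s := {k : ℕ | k • a ∈ T}) hm hm'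
  have hk₁ := (h.2 _ h₁ _ h₂ _ h₁' _ h₂' (by rw [← add_nsmul, ← add_nsmul, heq])).1
  have := (nsmul_left_inj ha).1 hk₁
  omega

theorem eq_setOf_nsmul (ha : a ≠ 0) (hP : ∀ x, MemDeterminedByMultiple T J a x) :
    T = {x | ∃ k ∈ {k : ℕ | k • a ∈ T}, x = k • a} := by
  ext x
  refine ⟨fun hx => ?_, fun ⟨k, hk, hx⟩ => hx ▸ hk⟩
  obtain ⟨k, s, hs, rfl⟩ := exists_nsmul_add_mem_La ha x
  obtain rfl := (hP _ k s hs rfl).1 hx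
  exact ⟨k, by simpa using hx, add_zero _⟩

theorem isDirectSum_nsmul_La (ha : a ≠ 0) (hP : ∀ x, MemDeterminedByMultiple T J a x) :
    IsDirectSum {x | ∃ k ∈ {k : ℕ | k • a ∈ J}, x = k • a} (La a) J := by
  refine ⟨Set.ext fun x => ⟨fun hx => ?_, ?_⟩, ?_⟩
  · obtain ⟨k, s, hs, rfl⟩ := exists_nsmul_add_mem_La ha x
    exact Set.add_mem_add ⟨k, (hP _ k s hs rfl).2.1 hx, rfl⟩ hs
  · rintro ⟨_, ⟨k, hk, rfl⟩, s, hs, rfl⟩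
    exact (hP _ k s hs rfl).2.2 hk
  · rintro _ ⟨k, -, rfl⟩ s hs _ ⟨k', -, rfl⟩ s' hs' heq
    obtain ⟨rfl, rfl⟩ := eq_of_nsmul_add_eq hs hs' heq
    exact ⟨rfl, rfl⟩

end Germ

theorem stmt10_general {n : ℕ} (hn : 2 ≤ n) (T J : Set (Fin n → ℕ))
    (h : IsDirectSum T J Set.univ)
    (a : Fin n → ℕ) (haT : a ∈ T) (hapos : ∀ i, 0 < a i)
    (hmin : ∀ b ∈ T, b ≠ 0 → b ≠ a → ∀ i, a i < b i) :
    ∃ A B : Set ℕ, IsDirectSum A B Set.univ ∧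
      T = {x | ∃ k ∈ A, x = k • a} ∧
      IsDirectSum {x : Fin n → ℕ | ∃ k ∈ B, x = k • a} (La a) J := by
  have ha : a ≠ 0 := fun ha0 => (hapos ⟨0, by omega⟩).ne' (congrFun ha0 _)
  have hle : ∀ t ∈ T, t ≠ 0 → a ≤ t := fun t ht ht0 => by
    obtain rfl | hta := eq_or_ne t a
    exacts [le_rfl, fun i => (hmin t ht ht0 hta i).le]
  have hP := memDeterminedByMultiple h hle haT hapos ha
  exact ⟨_, _, isDirectSum_nsmul_mem h ha hP, eq_setOf_nsmul ha hP, isDirectSum_nsmul_La ha hP⟩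

theorem stmt10 {n : ℕ} (hn : 2 ≤ n) (T J : Set (Fin n → ℕ))
    (h : IsDirectSum T J Set.univ)
    (hL : {x : Fin n → ℕ | ∃ i, x i = 0} ⊆ J)
    (a : Fin n → ℕ) (haT : a ∈ T) (hapos : ∀ i, 0 < a i)
    (hmin : ∀ b ∈ T, b ≠ 0 → b ≠ a → ∀ i, a i < b i) :
    ∃ A B : Set ℕ, IsDirectSum A B Set.univ ∧
      T = {x | ∃ k ∈ A, x = k • a} ∧
      IsDirectSum {x : Fin n → ℕ | ∃ k ∈ B, x = k • a} (La a) J :=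
  stmt10_general hn T J h a haT hapos hmin
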